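/- Let (Ω, F, P) be a probability space, p ∈ [1, ∞), and let ρ1, ρ2 : L^p(Ω, F, P) → ℝ be functionals continuous with respect to the L^p norm. Then for every Z ∈ L^p the infimum V(Z) := inf_{f ∈ A^0_Lip} [ρ1(f(Z)) + ρ2(Z − f(Z))] is attained at some f̂ ∈ A^0_Lip. -/

import Mathlib

/-!
`A⁰_Lip` is sequentially compact for pointwise convergence: its members satisfy `|f x| ≤ |x|`, so
a subsequence converges at every rational point, equi-Lipschitz continuity spreads this to all of
`ℝ`, and the defining conditions are closed. Along a pointwise convergent sequence in `A⁰_Lip`,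
`f (Z) → f̂ (Z)` in `L^p` by dominated convergence with dominating function `2 |Z|`, and the same
holds for `Z - f (Z)` because `Id - f ∈ A⁰_Lip`. The objective is therefore sequentially continuous
on a sequentially compact set, hence attains its minimum.
-/

open MeasureTheory Filter Topology
open scoped ENNReal NNReal

/-- The set `A⁰_Lip` of normalized Lipschitz allocations. -/
def IsA0Lip (f : ℝ → ℝ) : Prop :=
  f 0 = 0 ∧ LipschitzWith 1 f ∧ LipschitzWith 1 (fun x => x - f x)

/-- Sequential continuity of a functional with respect to the `L^p` norm. -/
def LpSeqContinuous {Ω : Type*} [MeasurableSpace Ω] (μ : MeasureTheory.Measure Ω)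
    (p : ℝ≥0∞) (ρ : (Ω → ℝ) → ℝ) : Prop :=
  ∀ (Y : ℕ → Ω → ℝ) (Z : Ω → ℝ), (∀ n, MemLp (Y n) p μ) → MemLp Z p μ →
    Filter.Tendsto (fun n => eLpNorm (Y n - Z) p μ) Filter.atTop (nhds 0) →
    Filter.Tendsto (fun n => ρ (Y n)) Filter.atTop (nhds (ρ Z))

theorem IsSeqCompact.exists_isMinOn {X β : Type*} [TopologicalSpace X] [TopologicalSpace β]
    [TopologicalSpace.PseudoMetrizableSpace β] [LinearOrder β] [ClosedIicTopology β] {s : Set X}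
    (hs : IsSeqCompact s) (hne : s.Nonempty) {Φ : X → β}
    (hΦ : ∀ (x : ℕ → X) (a : X), (∀ n, x n ∈ s) → a ∈ s →
      Tendsto x atTop (𝓝 a) → Tendsto (Φ ∘ x) atTop (𝓝 (Φ a))) :
    ∃ a ∈ s, IsMinOn Φ s a := by
  have himage : IsSeqCompact (Φ '' s) := by
    intro u hu
    choose x hxs hxu using hu
    obtain ⟨a, has, φ, hφ, hxa⟩ := hs hxs
    refine ⟨Φ a, Set.mem_image_of_mem Φ has, φ, hφ, ?_⟩
    simpa only [Function.comp_def, hxu] using hΦ (x ∘ φ) a (fun n => hxs (φ n)) has hxa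
  obtain ⟨_, ⟨a, has, rfl⟩, hleast⟩ := himage.isCompact.exists_isLeast (hne.image Φ)
  exact ⟨a, has, fun b hb => hleast (Set.mem_image_of_mem Φ hb)⟩

theorem tendsto_eLpNorm_zero_of_dominated {α E : Type*} [MeasurableSpace α] {μ : Measure α}
    [NormedAddCommGroup E] {p : ℝ≥0∞} (hp_top : p ≠ ∞) {F : ℕ → α → E} {G : α → ℝ}
    (hF : ∀ n, AEStronglyMeasurable (F n) μ) (hG : MemLp G p μ)
    (hbound : ∀ n, ∀ᵐ ω ∂μ, ‖F n ω‖ ≤ G ω)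
    (hlim : ∀ᵐ ω ∂μ, Tendsto (fun n => F n ω) atTop (𝓝 0)) :
    Tendsto (fun n => eLpNorm (F n) p μ) atTop (𝓝 0) := by
  rcases eq_or_ne p 0 with rfl | hp0
  · simp
  have hp : 0 < p.toReal := ENNReal.toReal_pos hp0 hp_top
  have hI : Tendsto (fun n => ∫⁻ ω, ‖F n ω‖ₑ ^ p.toReal ∂μ) atTop (𝓝 0) := by
    have hlim' : ∀ᵐ ω ∂μ, Tendsto (fun n => ‖F n ω‖ₑ ^ p.toReal) atTop (𝓝 0) :=
      hlim.mono fun ω h => by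
        simpa [ENNReal.zero_rpow_of_pos hp] using
          (((continuous_enorm.tendsto (0 : E)).comp h).ennrpow_const p.toReal)
    have hbound' : ∀ n, ∀ᵐ ω ∂μ, ‖F n ω‖ₑ ^ p.toReal ≤ ‖G ω‖ₑ ^ p.toReal := fun n =>
      (hbound n).mono fun ω h => by
        gcongr
        rw [enorm_le_iff_norm_le]
        exact h.trans (Real.le_norm_self _)
    simpa using tendsto_lintegral_of_dominated_convergence' _
      (fun n => (hF n).enorm.pow_const _) hbound'
      (lintegral_rpow_enorm_lt_top_of_eLpNorm_lt_top hp0 hp_top hG.2).ne hlim'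
  simpa [eLpNorm_eq_lintegral_rpow_enorm_toReal hp0 hp_top, ENNReal.zero_rpow_of_pos, hp]
    using hI.ennrpow_const (1 / p.toReal)

theorem LipschitzWith.cauchySeq_of_dense {X Y : Type*} [PseudoMetricSpace X]
    [PseudoMetricSpace Y] {K : ℝ≥0} {f : ℕ → X → Y} (hf : ∀ n, LipschitzWith K (f n))
    {s : Set X} (hs : Dense s) (h : ∀ y ∈ s, CauchySeq fun n => f n y) (x : X) :
    CauchySeq fun n => f n x := by
  rw [Metric.cauchySeq_iff]
  intro ε hε
  have hnear : ∀ᶠ y in 𝓝 x, 2 * K * dist x y < ε / 2 := by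
    have : Tendsto (fun y => 2 * K * dist x y) (𝓝 x) (𝓝 (2 * K * dist x x)) :=
      ((continuous_const.mul (continuous_const.dist continuous_id)).tendsto x)
    exact this.eventually (gt_mem_nhds (by simpa using half_pos hε))
  obtain ⟨y, hys, hy⟩ := ((mem_closure_iff_frequently.1 (hs x)).and_eventually hnear).exists
  obtain ⟨N, hN⟩ := Metric.cauchySeq_iff.1 (h y hys) (ε / 2) (half_pos hε)
  refine ⟨N, fun m hm n hn => ?_⟩
  calc dist (f m x) (f n x)
      ≤ dist (f m x) (f m y) + dist (f m y) (f n y) + dist (f n y) (f n x) :=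
        dist_triangle4 _ _ _ _
    _ ≤ K * dist x y + dist (f m y) (f n y) + K * dist y x := by
        gcongr
        exacts [(hf m).dist_le_mul x y, (hf n).dist_le_mul y x]
    _ < ε := by rw [dist_comm y x]; linarith [hN m hm n hn]

namespace IsA0Lip

theorem zero : IsA0Lip fun _ => 0 :=
  ⟨rfl, (LipschitzWith.const 0).weaken zero_le_one, by simp only [sub_zero]; exact LipschitzWith.id⟩

theorem id_sub {f : ℝ → ℝ} (hf : IsA0Lip f) : IsA0Lip fun x => x - f x :=
  ⟨by simp [hf.1], hf.2.2, by simpa using hf.2.1⟩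

theorem abs_le {f : ℝ → ℝ} (hf : IsA0Lip f) (x : ℝ) : |f x| ≤ |x| := by
  simpa [hf.1, Real.dist_eq] using hf.2.1.dist_le_mul x 0

theorem memLp_comp {Ω : Type*} [MeasurableSpace Ω] {μ : Measure Ω} {p : ℝ≥0∞}
    {Z : Ω → ℝ} (hZ : MemLp Z p μ) {f : ℝ → ℝ} (hf : IsA0Lip f) :
    MemLp (fun ω => f (Z ω)) p μ :=
  hZ.of_le (hf.2.1.continuous.comp_aestronglyMeasurable hZ.aestronglyMeasurable)
    (Eventually.of_forall fun ω => by simpa only [Real.norm_eq_abs] using hf.abs_le (Z ω))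

end IsA0Lip

theorem isClosed_setOf_isA0Lip : IsClosed {f : ℝ → ℝ | IsA0Lip f} :=
  (isClosed_eq (continuous_apply 0) continuous_const).inter
    ((isClosed_setOfPred_lipschitzWith 1).inter
      ((isClosed_setOfPred_lipschitzWith 1).preimage
        (continuous_pi fun x => continuous_const.sub (continuous_apply x))))

theorem isSeqCompact_setOf_isA0Lip : IsSeqCompact {f : ℝ → ℝ | IsA0Lip f} := by
  intro f hf
  have hK : IsCompact (Set.univ.pi fun q : ℚ => Set.Icc (-|(q : ℝ)|) |(q : ℝ)|) :=
    isCompact_univ_pi fun _ => isCompact_Icc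
  obtain ⟨L, -, φ, hφ, hL⟩ := hK.isSeqCompact (x := fun n (q : ℚ) => f n q)
    fun n q _ => abs_le.1 ((hf n).abs_le q)
  have hcauchy : ∀ x : ℝ, CauchySeq fun n => f (φ n) x :=
    LipschitzWith.cauchySeq_of_dense (fun n => (hf (φ n)).2.1) Rat.denseRange_cast
      (by rintro _ ⟨q, rfl⟩; exact ((tendsto_pi_nhds.1 hL) q).cauchySeq)
  choose fhat hfhat using fun x => cauchySeq_tendsto_of_complete (hcauchy x)
  have hconv : Tendsto (f ∘ φ) atTop (𝓝 fhat) := tendsto_pi_nhds.2 hfhat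
  exact ⟨fhat, isClosed_setOf_isA0Lip.mem_of_tendsto hconv
    (Eventually.of_forall fun n => hf (φ n)), φ, hφ, hconv⟩

theorem tendsto_eLpNorm_comp_sub_comp {Ω : Type*} [MeasurableSpace Ω] {μ : Measure Ω}
    {p : ℝ≥0∞} (hp_top : p ≠ ∞) {Z : Ω → ℝ} (hZ : MemLp Z p μ) {f : ℕ → ℝ → ℝ} {g : ℝ → ℝ}
    (hf : ∀ n, IsA0Lip (f n)) (hg : IsA0Lip g)
    (hfg : ∀ x, Tendsto (fun n => f n x) atTop (𝓝 (g x))) :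
    Tendsto (fun n => eLpNorm ((fun ω => f n (Z ω)) - fun ω => g (Z ω)) p μ) atTop (𝓝 0) := by
  refine tendsto_eLpNorm_zero_of_dominated hp_top
    (fun n => ((hf n).memLp_comp hZ |>.sub (hg.memLp_comp hZ)).aestronglyMeasurable)
    (hZ.norm.const_mul 2) (fun n => Eventually.of_forall fun ω => ?_)
    (Eventually.of_forall fun ω => by simpa using (hfg (Z ω)).sub_const (g (Z ω)))
  calc ‖f n (Z ω) - g (Z ω)‖ ≤ |f n (Z ω)| + |g (Z ω)| := abs_sub _ _
    _ ≤ 2 * ‖Z ω‖ := by linarith [(hf n).abs_le (Z ω), hg.abs_le (Z ω), Real.norm_eq_abs (Z ω)]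

theorem infimum_over_A0Lip_attained_general
    {Ω : Type*} [MeasurableSpace Ω] (μ : MeasureTheory.Measure Ω)
    (p : ℝ≥0∞) (hp_top : p ≠ ∞)
    (ρ1 ρ2 : (Ω → ℝ) → ℝ)
    (h1 : LpSeqContinuous μ p ρ1) (h2 : LpSeqContinuous μ p ρ2)
    (Z : Ω → ℝ) (hZ : MemLp Z p μ) :
    ∃ fhat : ℝ → ℝ, IsA0Lip fhat ∧
      ∀ g : ℝ → ℝ, IsA0Lip g →
        ρ1 (fun ω => fhat (Z ω)) + ρ2 (fun ω => Z ω - fhat (Z ω)) ≤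
        ρ1 (fun ω => g (Z ω)) + ρ2 (fun ω => Z ω - g (Z ω)) := by
  have hcont : ∀ (f : ℕ → ℝ → ℝ) (g : ℝ → ℝ), (∀ n, IsA0Lip (f n)) → IsA0Lip g →
      Tendsto f atTop (𝓝 g) → Tendsto (fun n => ρ1 (fun ω => f n (Z ω)) +
        ρ2 (fun ω => Z ω - f n (Z ω))) atTop
        (𝓝 (ρ1 (fun ω => g (Z ω)) + ρ2 (fun ω => Z ω - g (Z ω)))) := by
    intro f g hf hg hfg
    have hfg' := tendsto_pi_nhds.1 hfg
    exact (h1 (fun n ω => f n (Z ω)) (fun ω => g (Z ω)) (fun n => (hf n).memLp_comp hZ)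
      (hg.memLp_comp hZ) (tendsto_eLpNorm_comp_sub_comp hp_top hZ hf hg hfg')).add
      (h2 (fun n ω => Z ω - f n (Z ω)) (fun ω => Z ω - g (Z ω))
        (fun n => (hf n).id_sub.memLp_comp hZ) (hg.id_sub.memLp_comp hZ)
        (tendsto_eLpNorm_comp_sub_comp (f := fun n x => x - f n x) (g := fun x => x - g x)
          hp_top hZ (fun n => (hf n).id_sub) hg.id_sub fun x => (hfg' x).const_sub x))
  obtain ⟨fhat, hfhat, hmin⟩ := isSeqCompact_setOf_isA0Lip.exists_isMinOn
    ⟨fun _ => 0, IsA0Lip.zero⟩ hcont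
  exact ⟨fhat, hfhat, fun g hg => hmin hg⟩

/-- For `L^p`-norm-continuous functionals `ρ1, ρ2` the infimum
`inf_{f ∈ A⁰_Lip} [ρ1(f(Z)) + ρ2(Z - f(Z))]` is attained at some `f̂ ∈ A⁰_Lip`. -/
theorem infimum_over_A0Lip_attained
    {Ω : Type*} [MeasurableSpace Ω] (μ : MeasureTheory.Measure Ω) [IsProbabilityMeasure μ]
    (p : ℝ≥0∞) (hp : 1 ≤ p) (hp_top : p ≠ ∞)
    (ρ1 ρ2 : (Ω → ℝ) → ℝ)
    (h1 : LpSeqContinuous μ p ρ1) (h2 : LpSeqContinuous μ p ρ2)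
    (Z : Ω → ℝ) (hZ : MemLp Z p μ) :
    ∃ fhat : ℝ → ℝ, IsA0Lip fhat ∧
      ∀ g : ℝ → ℝ, IsA0Lip g →
        ρ1 (fun ω => fhat (Z ω)) + ρ2 (fun ω => Z ω - fhat (Z ω)) ≤
        ρ1 (fun ω => g (Z ω)) + ρ2 (fun ω => Z ω - g (Z ω)) :=
  infimum_over_A0Lip_attained_general μ p hp_top ρ1 ρ2 h1 h2 Z hZ
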